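/- Let g be a real number with -2 < g < 2, h = sqrt(1 - g²/4), G = g/h. For s ∈ (0,1) define Φ(s) = π/2 + arctan(G/2) - arctan((sqrt(1-s²) + (g/2)s)/(h·s)) and φ(s) = sqrt(1 + g·s·sqrt(1-s²))·exp((G/2)Φ(s)). Then for every s ∈ (0,1) one has the identity (φ(s) - s·φ′(s))² = φ(s)·( φ(s) - s·φ′(s) + (1 - s²)·φ″(s) ). -/

import Mathlib

/-!
Write `r = √(1 - s²)` and `B = 1 + g s r`. The logarithmic derivative of `φ` collapses to
`L = g r / B`: the square-root factor contributes `g (1 - 2s²) / (2 r B)` and the angle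
`Φ` has derivative `h / (r B)`, which the factor `G / 2 = g / (2h)` turns into `g / (2 r B)`.
With `φ' = φ L` and `φ'' = φ (L² + L')`, the identity is equivalent to the Riccati equation
`(1 - s²) L' = (2s² - 1) L² - s L`, which `L = g r / B` satisfies.
-/

open Real Set Filter Topology

theorem iteratedDeriv_two_eq_of_hasDerivAt_mul {𝕜 : Type*} [NontriviallyNormedField 𝕜]
    {φ L : 𝕜 → 𝕜} {s L' : 𝕜} (hφ : ∀ᶠ x in 𝓝 s, HasDerivAt φ (φ x * L x) x)
    (hL : HasDerivAt L L' s) :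
    iteratedDeriv 2 φ s = φ s * (L s ^ 2 + L') := by
  have hderiv : deriv φ =ᶠ[𝓝 s] fun x => φ x * L x := hφ.mono fun x hx => hx.deriv
  rw [iteratedDeriv_succ, iteratedDeriv_one, hderiv.deriv_eq]
  exact (hφ.self_of_nhds.mul hL).deriv.trans (by ring)

theorem sq_sub_mul_deriv_eq_of_riccati {φ L : ℝ → ℝ} {s L' : ℝ}
    (hφ : ∀ᶠ x in 𝓝 s, HasDerivAt φ (φ x * L x) x) (hL : HasDerivAt L L' s)
    (hric : (1 - s ^ 2) * L' = (2 * s ^ 2 - 1) * L s ^ 2 - s * L s) :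
    (φ s - s * deriv φ s) ^ 2
      = φ s * (φ s - s * deriv φ s + (1 - s ^ 2) * iteratedDeriv 2 φ s) := by
  rw [iteratedDeriv_two_eq_of_hasDerivAt_mul hφ hL, hφ.self_of_nhds.deriv]
  linear_combination (-φ s ^ 2) * hric

theorem hasDerivAt_sqrt_one_sub_sq {t : ℝ} (ht : t ^ 2 < 1) :
    HasDerivAt (fun x => √(1 - x ^ 2)) (-t / √(1 - t ^ 2)) t := by
  convert ((hasDerivAt_pow 2 t).const_sub 1).sqrt (by linarith) using 1
  field_simp
  ring

noncomputable section

def finsleroidB (g s : ℝ) : ℝ := 1 + g * s * √(1 - s ^ 2)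

def finsleroidLogDeriv (g s : ℝ) : ℝ := g * √(1 - s ^ 2) / finsleroidB g s

def finsleroidAngle (g h s : ℝ) : ℝ :=
  π / 2 + arctan (g / h / 2) - arctan ((√(1 - s ^ 2) + g / 2 * s) / (h * s))

def finsleroidMetricFn (g h s : ℝ) : ℝ :=
  √(finsleroidB g s) * exp (g / h / 2 * finsleroidAngle g h s)

end

section

variable {g h t : ℝ}

theorem finsleroidB_pos (hg₁ : -2 < g) (hg₂ : g < 2) (ht : t ^ 2 ≤ 1) :
    0 < finsleroidB g t := by
  set r := √(1 - t ^ 2)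
  have hr2 : r ^ 2 = 1 - t ^ 2 := sq_sqrt (by linarith)
  have htr : |t * r| ≤ 1 / 2 :=
    abs_le.2 ⟨by nlinarith [sq_nonneg (t + r)], by nlinarith [sq_nonneg (t - r)]⟩
  have hgtr : |g * (t * r)| < 1 := by
    rw [abs_mul]
    linarith [abs_lt.2 ⟨hg₁, hg₂⟩, mul_le_mul_of_nonneg_left htr (abs_nonneg g)]
  unfold finsleroidB
  linarith [neg_abs_le (g * (t * r)), mul_assoc g t r]

theorem hasDerivAt_finsleroidB (ht : t ^ 2 < 1) :
    HasDerivAt (finsleroidB g) (g * (1 - 2 * t ^ 2) / √(1 - t ^ 2)) t := by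
  have hr2 : √(1 - t ^ 2) ^ 2 = 1 - t ^ 2 := sq_sqrt (by linarith)
  have hr : √(1 - t ^ 2) ≠ 0 := (sqrt_pos.2 (by linarith)).ne'
  refine ((((hasDerivAt_id t).const_mul g).mul (hasDerivAt_sqrt_one_sub_sq ht)).const_add
    1).congr_deriv ?_
  field_simp
  simp only [id_eq]
  linear_combination g * hr2

theorem hasDerivAt_finsleroidLogDeriv (hg₁ : -2 < g) (hg₂ : g < 2) (ht : t ^ 2 < 1) :
    HasDerivAt (finsleroidLogDeriv g)
      (((2 * t ^ 2 - 1) * finsleroidLogDeriv g t ^ 2 - t * finsleroidLogDeriv g t)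
        / (1 - t ^ 2)) t := by
  have hr2 : √(1 - t ^ 2) ^ 2 = 1 - t ^ 2 := sq_sqrt (by linarith)
  have hB := (finsleroidB_pos hg₁ hg₂ ht.le).ne'
  refine (((hasDerivAt_sqrt_one_sub_sq ht).const_mul g).div (hasDerivAt_finsleroidB ht)
    hB).congr_deriv ?_
  unfold finsleroidLogDeriv finsleroidB at *
  generalize √(1 - t ^ 2) = r at *
  rw [← hr2]
  field_simp
  ring

theorem hasDerivAt_finsleroidAngle (hh : h ^ 2 = 1 - g ^ 2 / 4) (hh₀ : h ≠ 0) (ht₀ : t ≠ 0)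
    (ht : t ^ 2 < 1) :
    HasDerivAt (finsleroidAngle g h) (h / (√(1 - t ^ 2) * finsleroidB g t)) t := by
  have hr2 : √(1 - t ^ 2) ^ 2 = 1 - t ^ 2 := sq_sqrt (by linarith)
  have hr : √(1 - t ^ 2) ≠ 0 := (sqrt_pos.2 (by linarith)).ne'
  have harg : HasDerivAt (fun x => (√(1 - x ^ 2) + g / 2 * x) / (h * x))
      (-(1 / (√(1 - t ^ 2) * h * t ^ 2))) t := by
    refine (((hasDerivAt_sqrt_one_sub_sq ht).add ((hasDerivAt_id t).const_mul (g / 2))).div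
      ((hasDerivAt_id t).const_mul h) (mul_ne_zero hh₀ ht₀)).congr_deriv ?_
    simp only [Pi.add_apply, id_eq]
    field_simp
    linear_combination (-2) * hr2
  have hsq : 1 + ((√(1 - t ^ 2) + g / 2 * t) / (h * t)) ^ 2
      = finsleroidB g t / (h ^ 2 * t ^ 2) := by
    unfold finsleroidB
    field_simp
    linear_combination 4 * hr2 + 4 * t ^ 2 * hh
  refine (harg.arctan.const_sub (π / 2 + arctan (g / h / 2))).congr_deriv ?_
  rw [hsq]
  field_simp

theorem hasDerivAt_finsleroidMetricFn (hg₁ : -2 < g) (hg₂ : g < 2)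
    (hh : h ^ 2 = 1 - g ^ 2 / 4) (ht₀ : t ≠ 0) (ht : t ^ 2 < 1) :
    HasDerivAt (finsleroidMetricFn g h)
      (finsleroidMetricFn g h t * finsleroidLogDeriv g t) t := by
  have hr2 : √(1 - t ^ 2) ^ 2 = 1 - t ^ 2 := sq_sqrt (by linarith)
  have hr : √(1 - t ^ 2) ≠ 0 := (sqrt_pos.2 (by linarith)).ne'
  have hB := finsleroidB_pos hg₁ hg₂ ht.le
  have hsB : √(finsleroidB g t) ^ 2 = finsleroidB g t := sq_sqrt hB.le
  have hh₀ : h ≠ 0 := by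
    rintro rfl
    nlinarith
  refine (((hasDerivAt_finsleroidB ht).sqrt hB.ne').mul
    (((hasDerivAt_finsleroidAngle hh hh₀ ht₀ ht).const_mul (g / h / 2)).exp)).congr_deriv ?_
  unfold finsleroidMetricFn finsleroidLogDeriv
  field_simp
  rw [hsB]
  unfold finsleroidB
  linear_combination -2 * g * (1 + g * t * √(1 - t ^ 2)) * hr2

end

/-- On `0 < s < 1`, the generating metric function `φ(s)` satisfies the identity
`(φ - s·φ′)² = φ·(φ - s·φ′ + (1 - s²)·φ″)`. -/
theorem stmt_16 (g : ℝ) (hg₁ : -2 < g) (hg₂ : g < 2)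
    (h : ℝ) (hh : h = Real.sqrt (1 - g ^ 2 / 4)) (G : ℝ) (hG : G = g / h)
    (Φ : ℝ → ℝ)
    (hΦ : Φ = fun s => π / 2 + arctan (G / 2)
      - arctan ((Real.sqrt (1 - s ^ 2) + g / 2 * s) / (h * s)))
    (φ : ℝ → ℝ)
    (hφ : φ = fun s =>
      Real.sqrt (1 + g * s * Real.sqrt (1 - s ^ 2)) * Real.exp (G / 2 * Φ s)) :
    ∀ s ∈ Set.Ioo (0 : ℝ) 1,
      (φ s - s * deriv φ s) ^ 2
        = φ s * (φ s - s * deriv φ s + (1 - s ^ 2) * iteratedDeriv 2 φ s) := by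
  intro s hs
  have hh2 : h ^ 2 = 1 - g ^ 2 / 4 := by
    rw [hh]
    exact sq_sqrt (by nlinarith)
  have hφ' : φ = finsleroidMetricFn g h := by
    subst hφ hΦ hG
    rfl
  have hsq {t : ℝ} (ht : t ∈ Ioo (0 : ℝ) 1) : t ^ 2 < 1 := by nlinarith [ht.1, ht.2]
  rw [hφ']
  refine sq_sub_mul_deriv_eq_of_riccati ?_ (hasDerivAt_finsleroidLogDeriv hg₁ hg₂ (hsq hs)) ?_
  · filter_upwards [Ioo_mem_nhds hs.1 hs.2] with t ht
    exact hasDerivAt_finsleroidMetricFn hg₁ hg₂ hh2 ht.1.ne' (hsq ht)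
  · exact mul_div_cancel₀ _ (sub_pos.2 (hsq hs)).ne'
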